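/- Addition of reals distributes over binary-expansion decoding with carry: if x = ∑_{i<n} a_i 2^i + ∑_{i≥0} b_i 2^{-(i+1)} and y = ∑_{i<n} a'_i 2^i + ∑_{i≥0} b'_i 2^{-(i+1)} with all digits in {0,1}, and the digitwise sums a_i + a'_i and b_i + b'_i together with a carry sequence c (with c_i ∈ {0,1}) satisfy the standard schoolbook addition constraints s_i = a_i + a'_i + c_{i-1} − 2·c_i ∈ {0,1} at each position (carries propagating from lower to higher positions, no carry out of the top position), then x + y = ∑_{i<n} s_i 2^i + ∑_{i≥0} t_i 2^{-(i+1)} where t is the resulting fractional digit sequence. -/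
import Mathlib

open Filter Topology

lemma summ_aux (b : ℕ → ℕ) (hb : ∀ i, b i ≤ 1) :
    Summable (fun i : ℕ => (b i : ℝ) * (2 : ℝ) ^ (-((i : ℤ) + 1))) := by
  refine Summable.of_nonneg_of_le (fun i => by positivity) (fun i => ?_)
    (summable_geometric_of_lt_one (r := (1/2:ℝ)) (by norm_num) (by norm_num))
  have h1 : (b i : ℝ) ≤ 1 := by exact_mod_cast hb i
  have h2 : (2 : ℝ) ^ (-((i : ℤ) + 1)) ≤ (1/2 : ℝ) ^ i := by
    rw [zpow_neg]
    rw [show ((i : ℤ) + 1) = (i + 1 : ℕ) by push_cast; ring, zpow_natCast]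
    rw [one_div, inv_pow]
    rw [inv_le_inv₀ (by positivity) (by positivity)]
    apply pow_le_pow_right₀ (by norm_num)
    omega
  have h3 : (b i : ℝ) * (2 : ℝ) ^ (-((i : ℤ) + 1)) ≤ 1 * (1/2:ℝ)^i :=
    mul_le_mul h1 h2 (by positivity) (by norm_num)
  simpa using h3

theorem stmt_19 (n : ℕ) (a a' s : ℕ → ℕ) (b b' t : ℕ → ℕ) (c : ℤ → ℕ)
    (ha : ∀ i, a i ≤ 1) (ha' : ∀ i, a' i ≤ 1) (hs : ∀ i, s i ≤ 1)
    (hb : ∀ i, b i ≤ 1) (hb' : ∀ i, b' i ≤ 1) (ht : ∀ i, t i ≤ 1)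
    (hc : ∀ j, c j ≤ 1)
    (x y : ℝ)
    (hx : x = (∑ i ∈ Finset.range n, (a i : ℝ) * (2 : ℝ) ^ i) +
              ∑' i : ℕ, (b i : ℝ) * (2 : ℝ) ^ (-((i : ℤ) + 1)))
    (hy : y = (∑ i ∈ Finset.range n, (a' i : ℝ) * (2 : ℝ) ^ i) +
              ∑' i : ℕ, (b' i : ℝ) * (2 : ℝ) ^ (-((i : ℤ) + 1)))
    -- schoolbook addition constraints at the integer positions
    (hint : ∀ i < n, (s i : ℤ) = (a i : ℤ) + (a' i : ℤ) + c ((i : ℤ) - 1) - 2 * c i)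
    -- schoolbook addition constraints at the fractional positions
    (hfrac : ∀ i : ℕ,
      (t i : ℤ) = (b i : ℤ) + (b' i : ℤ) + c (-(i : ℤ) - 2) - 2 * c (-(i : ℤ) - 1))
    -- no carry out of the top position
    (htop : c ((n : ℤ) - 1) = 0) :
    x + y = (∑ i ∈ Finset.range n, (s i : ℝ) * (2 : ℝ) ^ i) +
            ∑' i : ℕ, (t i : ℝ) * (2 : ℝ) ^ (-((i : ℤ) + 1)) := by
  -- Integer part: partial-sum identity
  have hintsum : ∀ m ≤ n,
      (∑ i ∈ Finset.range m, (s i : ℝ) * (2 : ℝ) ^ i)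
        = (∑ i ∈ Finset.range m, ((a i : ℝ) + (a' i : ℝ)) * (2 : ℝ) ^ i)
          + (c (-1) : ℝ) - (c ((m : ℤ) - 1) : ℝ) * (2 : ℝ) ^ m := by
    intro m hm
    induction m with
    | zero => simp
    | succ k ih =>
      have hk : k ≤ n := Nat.le_of_succ_le hm
      have hsk : (s k : ℝ) = (a k : ℝ) + (a' k : ℝ) + (c ((k : ℤ) - 1) : ℝ)
          - 2 * (c (k : ℤ) : ℝ) := by
        exact_mod_cast hint k (by omega)
      rw [Finset.sum_range_succ, Finset.sum_range_succ, ih hk, hsk]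
      have : ((k : ℕ) + 1 : ℤ) - 1 = (k : ℤ) := by ring
      push_cast [this]
      ring
  -- Fractional part: partial-sum identity
  have hfracsum : ∀ N : ℕ,
      (∑ i ∈ Finset.range N, (t i : ℝ) * (2 : ℝ) ^ (-((i : ℤ) + 1)))
        = (∑ i ∈ Finset.range N, ((b i : ℝ) + (b' i : ℝ)) * (2 : ℝ) ^ (-((i : ℤ) + 1)))
          + (c (-(N : ℤ) - 1) : ℝ) * (2 : ℝ) ^ (-(N : ℤ)) - (c (-1) : ℝ) := by
    intro N
    induction N with
    | zero => simp
    | succ k ih =>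
      have htk : (t k : ℝ) = (b k : ℝ) + (b' k : ℝ) + (c (-(k : ℤ) - 2) : ℝ)
          - 2 * (c (-(k : ℤ) - 1) : ℝ) := by
        exact_mod_cast hfrac k
      rw [Finset.sum_range_succ, Finset.sum_range_succ, ih, htk]
      have e1 : (-(((k : ℕ) + 1 : ℕ) : ℤ) - 1) = (-(k : ℤ) - 2) := by push_cast; ring
      have e2 : (-(((k : ℕ) + 1 : ℕ) : ℤ)) = (-(k : ℤ) - 1) := by push_cast; ring
      rw [e1, e2]
      have p1 : (2 : ℝ) ^ (-(k : ℤ) - 1) = (2:ℝ) ^ (-(k:ℤ)) / 2 := by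
        rw [zpow_sub₀ (by norm_num)]; norm_num
      have p3 : (2 : ℝ) ^ (-((k : ℤ) + 1)) = (2:ℝ) ^ (-(k:ℤ)) / 2 := by
        rw [show (-((k:ℤ)+1)) = (-(k:ℤ) - 1) by ring, p1]
      rw [p1, p3]
      ring
  -- summability
  have Sb := summ_aux b hb
  have Sb' := summ_aux b' hb'
  have St := summ_aux t ht
  -- limit of carry term
  have hcar : Tendsto (fun N : ℕ => (c (-(N : ℤ) - 1) : ℝ) * (2 : ℝ) ^ (-(N : ℤ)))
      atTop (𝓝 0) := by
    have h0 : Tendsto (fun N : ℕ => (1/2 : ℝ) ^ N) atTop (𝓝 0) :=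
      tendsto_pow_atTop_nhds_zero_of_lt_one (by norm_num) (by norm_num)
    refine squeeze_zero (g := fun N : ℕ => (1/2 : ℝ) ^ N) (fun N => by positivity)
      (fun N => ?_) h0
    · have h1 : (c (-(N : ℤ) - 1) : ℝ) ≤ 1 := by exact_mod_cast hc _
      have h2 : (2 : ℝ) ^ (-(N : ℤ)) = (1/2 : ℝ) ^ N := by
        rw [zpow_neg, zpow_natCast, one_div, inv_pow]
      rw [h2]
      nlinarith [pow_nonneg (by norm_num : (0:ℝ) ≤ 1/2) N,
        Nat.cast_nonneg (c (-(N : ℤ) - 1)) (α := ℝ)]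
  -- tsum identity for fractional part
  have hfr : (∑' i : ℕ, (t i : ℝ) * (2 : ℝ) ^ (-((i : ℤ) + 1)))
      = (∑' i : ℕ, (b i : ℝ) * (2 : ℝ) ^ (-((i : ℤ) + 1)))
        + (∑' i : ℕ, (b' i : ℝ) * (2 : ℝ) ^ (-((i : ℤ) + 1))) - (c (-1) : ℝ) := by
    have hT := St.hasSum.tendsto_sum_nat
    have hB := (Sb.hasSum.add Sb'.hasSum).tendsto_sum_nat
    have hB' : Tendsto (fun N : ℕ =>
        (∑ i ∈ Finset.range N, ((b i : ℝ) + (b' i : ℝ)) * (2 : ℝ) ^ (-((i : ℤ) + 1)))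
          + (c (-(N : ℤ) - 1) : ℝ) * (2 : ℝ) ^ (-(N : ℤ)) - (c (-1) : ℝ))
        atTop (𝓝 ((∑' i : ℕ, (b i : ℝ) * (2 : ℝ) ^ (-((i : ℤ) + 1)))
          + (∑' i : ℕ, (b' i : ℝ) * (2 : ℝ) ^ (-((i : ℤ) + 1))) - (c (-1) : ℝ))) := by
      have hBeq : ∀ N : ℕ,
          (∑ i ∈ Finset.range N, ((b i : ℝ) * (2 : ℝ) ^ (-((i : ℤ) + 1))
            + (b' i : ℝ) * (2 : ℝ) ^ (-((i : ℤ) + 1))))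
          = ∑ i ∈ Finset.range N, ((b i : ℝ) + (b' i : ℝ)) * (2 : ℝ) ^ (-((i : ℤ) + 1)) :=
        fun N => Finset.sum_congr rfl (fun i _ => by ring)
      have hB2 := hB.congr hBeq
      have := (hB2.add hcar).sub_const ((c (-1) : ℝ))
      simpa using this
    have hT' : Tendsto (fun N : ℕ =>
        ∑ i ∈ Finset.range N, (t i : ℝ) * (2 : ℝ) ^ (-((i : ℤ) + 1))) atTop
        (𝓝 ((∑' i : ℕ, (b i : ℝ) * (2 : ℝ) ^ (-((i : ℤ) + 1)))
          + (∑' i : ℕ, (b' i : ℝ) * (2 : ℝ) ^ (-((i : ℤ) + 1))) - (c (-1) : ℝ))) := by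
      apply hB'.congr
      intro N
      exact (hfracsum N).symm
    exact tendsto_nhds_unique hT hT'
  have hi := hintsum n le_rfl
  rw [htop] at hi
  push_cast at hi
  rw [hx, hy, hfr, hi]
  have : (∑ i ∈ Finset.range n, ((a i : ℝ) + (a' i : ℝ)) * (2 : ℝ) ^ i)
      = (∑ i ∈ Finset.range n, (a i : ℝ) * (2 : ℝ) ^ i)
        + (∑ i ∈ Finset.range n, (a' i : ℝ) * (2 : ℝ) ^ i) := by
    rw [← Finset.sum_add_distrib]
    apply Finset.sum_congr rfl
    intro i _
    ring
  rw [this]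
  ring
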